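/- arXiv:2007.15833 — 5 statements merged into one kernel-verified Lean document; each statement's English description precedes it below -/
import Mathlib

section
/- Let B : ℝ → (n×n real matrices) be continuous and let y : ℝ → ℝⁿ be differentiable with y′(t) = B(t) y(t) for all t in [s, T]. Then for every t ∈ [s, T], ‖y(t)‖₁ ≤ exp( ∫_s^t γ(B(u)) du ) · ‖y(s)‖₁, where γ(M) = max_{1≤j≤n} ( M_{jj} + Σ_{i≠j} |M_{ij}| ). -/
open Filter Topology Finset Matrix

/-- The `ℓ¹` logarithmic norm of a matrix: `γ(M) = max_j (M j j + ∑_{i ≠ j} |M i j|)`. -/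
noncomputable def logNormL1 {n : ℕ} (M : Matrix (Fin (n + 1)) (Fin (n + 1)) ℝ) : ℝ :=
  Finset.univ.sup' Finset.univ_nonempty fun j => M j j + ∑ i ∈ Finset.univ.erase j, |M i j|

/-!
For small `h ≥ 0` the matrix `1 + h • M` has `ℓ¹` operator norm (maximal column sum) at most
`1 + h γ(M)`, so `‖y(t + h)‖₁ ≤ (1 + h γ(B t)) ‖y t‖₁ + o(h)`: the upper right Dini derivative
of `‖y‖₁` is at most `γ(B t) ‖y t‖₁`. A Grönwall comparison with the barrier
`(‖y s‖₁ + ε) exp (∫ (γ ∘ B + ε))`, followed by `ε → 0`, gives the bound.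
-/

theorem le_exp_integral_mul_of_slope_right_le {f g : ℝ → ℝ} {a b : ℝ}
    (hf : ContinuousOn f (Set.Icc a b)) (hg : Continuous g) (ha : 0 ≤ f a)
    (hf' : ∀ x ∈ Set.Ico a b, ∀ r, g x * f x < r → ∃ᶠ z in 𝓝[>] x, slope f x z < r)
    {x : ℝ} (hx : x ∈ Set.Icc a b) : f x ≤ Real.exp (∫ u in a..x, g u) * f a := by
  set barrier : ℝ → ℝ → ℝ := fun ε x => (f a + ε) * Real.exp ((∫ u in a..x, g u) + ε * (x - a))
  have hbarrier : ∀ ε > 0, f x ≤ barrier ε x := by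
    intro ε hε
    have hderiv : ∀ x, HasDerivAt (barrier ε) (barrier ε x * (g x + ε)) x := fun x =>
      ((((hg.integral_hasStrictDerivAt a x).hasDerivAt.add
        (((hasDerivAt_id x).sub_const a).const_mul ε)).exp).const_mul (f a + ε)).congr_deriv
        (by simp only [barrier, Pi.add_apply, id]; ring)
    refine image_le_of_liminf_slope_right_lt_deriv_boundary hf hf' (by simp [barrier]; linarith)
      hderiv (fun x _ hfx => ?_) hx
    have : 0 < barrier ε x := mul_pos (by linarith) (Real.exp_pos _)
    rw [hfx]
    nlinarith
  have hcont : ContinuousWithinAt (fun ε => barrier ε x) (Set.Ioi 0) 0 := by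
    simp only [barrier]
    fun_prop
  have := continuousWithinAt_const.closure_le (by simp) hcont hbarrier
  simpa [barrier, mul_comm] using this

theorem sum_abs_mulVec_le {m n : Type*} [Fintype m] [Fintype n] (A : Matrix m n ℝ)
    (x : n → ℝ) {c : ℝ} (hA : ∀ j, ∑ i, |A i j| ≤ c) :
    ∑ i, |(A *ᵥ x) i| ≤ c * ∑ j, |x j| :=
  calc ∑ i, |(A *ᵥ x) i|
      ≤ ∑ i, ∑ j, |A i j| * |x j| := by
        refine sum_le_sum fun i _ => (abs_sum_le_sum_abs _ _).trans_eq ?_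
        simp only [abs_mul]
    _ = ∑ j, (∑ i, |A i j|) * |x j| := by
        rw [sum_comm]
        simp only [sum_mul]
    _ ≤ ∑ j, c * |x j| := by gcongr with j; exact hA j
    _ = c * ∑ j, |x j| := by rw [mul_sum]

theorem sum_abs_le_sum_abs_add_card_mul_norm_sub {ι : Type*} [Fintype ι] (v w : ι → ℝ) :
    ∑ i, |v i| ≤ ∑ i, |w i| + Fintype.card ι * ‖v - w‖ := by
  have hcoord : ∀ i, |v i| ≤ |w i| + ‖v - w‖ := fun i =>
    calc |v i| ≤ |w i| + |v i - w i| := by linarith [abs_sub_abs_le_abs_sub (v i) (w i)]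
      _ ≤ |w i| + ‖v - w‖ := by
        gcongr
        exact norm_le_pi_norm (v - w) i
  calc ∑ i, |v i| ≤ ∑ i, (|w i| + ‖v - w‖) := sum_le_sum fun i _ => hcoord i
    _ = ∑ i, |w i| + Fintype.card ι * ‖v - w‖ := by
        rw [sum_add_distrib, sum_const, card_univ, nsmul_eq_mul]

section logNormL1

variable {n : ℕ}

theorem le_logNormL1 (M : Matrix (Fin (n + 1)) (Fin (n + 1)) ℝ) (j : Fin (n + 1)) :
    M j j + ∑ i ∈ univ.erase j, |M i j| ≤ logNormL1 M :=
  le_sup' (fun j => M j j + ∑ i ∈ univ.erase j, |M i j|) (mem_univ j)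

theorem continuous_logNormL1 : Continuous (logNormL1 (n := n)) :=
  Continuous.finset_sup'_apply univ_nonempty fun j _ =>
    (continuous_id.matrix_elem j j).add
      (continuous_finsetSum _ fun i _ => (continuous_id.matrix_elem i j).abs)

theorem sum_abs_one_add_smul_le {M : Matrix (Fin (n + 1)) (Fin (n + 1)) ℝ} {h : ℝ} (hh : 0 ≤ h)
    (j : Fin (n + 1)) (hdiag : 0 ≤ 1 + h * M j j) :
    ∑ i, |(1 + h • M) i j| ≤ 1 + h * logNormL1 M := by
  have hoff : ∑ i ∈ univ.erase j, |(1 + h • M) i j| = h * ∑ i ∈ univ.erase j, |M i j| := by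
    rw [mul_sum]
    refine sum_congr rfl fun i hi => ?_
    rw [Matrix.add_apply, one_apply_ne (ne_of_mem_erase hi), Matrix.smul_apply, smul_eq_mul,
      zero_add, abs_mul, abs_of_nonneg hh]
  rw [← add_sum_erase _ _ (mem_univ j), hoff, Matrix.add_apply, one_apply_eq, Matrix.smul_apply,
    smul_eq_mul, abs_of_nonneg hdiag]
  nlinarith [mul_le_mul_of_nonneg_left (le_logNormL1 M j) hh]

theorem sum_abs_add_smul_mulVec_le (M : Matrix (Fin (n + 1)) (Fin (n + 1)) ℝ)
    (x : Fin (n + 1) → ℝ) {h : ℝ} (hh : 0 ≤ h) (hdiag : ∀ j, 0 ≤ 1 + h * M j j) :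
    ∑ i, |(x + h • (M *ᵥ x)) i| ≤ (1 + h * logNormL1 M) * ∑ i, |x i| := by
  have : x + h • (M *ᵥ x) = (1 + h • M) *ᵥ x := by
    rw [add_mulVec, one_mulVec, smul_mulVec]
  rw [this]
  exact sum_abs_mulVec_le _ x fun j => sum_abs_one_add_smul_le hh j (hdiag j)

theorem eventually_slope_sum_abs_lt {y : ℝ → Fin (n + 1) → ℝ}
    {M : Matrix (Fin (n + 1)) (Fin (n + 1)) ℝ} {t r : ℝ} (hy : HasDerivAt y (M *ᵥ y t) t)
    (hr : logNormL1 M * ∑ i, |y t i| < r) :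
    ∀ᶠ z in 𝓝[>] t, slope (fun u => ∑ i, |y u i|) t z < r := by
  set L := ∑ i, |y t i|
  set c := (r - logNormL1 M * L) / (2 * (n + 1))
  have hc : 0 < c := div_pos (by linarith) (by positivity)
  have hcard : (n + 1 : ℝ) * c < r - logNormL1 M * L := by
    rw [show (n + 1 : ℝ) * c = (r - logNormL1 M * L) / 2 by simp only [c]; field_simp]
    linarith
  have hrem : ∀ᶠ z in 𝓝 t, ‖y z - y t - (z - t) • (M *ᵥ y t)‖ ≤ c * ‖z - t‖ :=
    (hasDerivAt_iff_isLittleO.mp hy).def hc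
  have hdiag : ∀ᶠ z in 𝓝 t, ∀ j, 0 ≤ 1 + (z - t) * M j j :=
    eventually_all.mpr fun j => (Continuous.tendsto (by fun_prop) t).eventually_const_le
      (by simp)
  filter_upwards [nhdsWithin_le_nhds hrem, nhdsWithin_le_nhds hdiag, self_mem_nhdsWithin]
    with z hz_rem hz_diag (hz : t < z)
  have hzt : 0 < z - t := sub_pos.mpr hz
  have hbound : ∑ i, |y z i| ≤ (1 + (z - t) * logNormL1 M) * L + (n + 1) * (c * (z - t)) :=
    calc ∑ i, |y z i|
        ≤ ∑ i, |(y t + (z - t) • (M *ᵥ y t)) i|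
            + (n + 1) * ‖y z - (y t + (z - t) • (M *ᵥ y t))‖ := by
          simpa only [Fintype.card_fin, Nat.cast_add_one] using
            sum_abs_le_sum_abs_add_card_mul_norm_sub (y z) (y t + (z - t) • (M *ᵥ y t))
      _ ≤ (1 + (z - t) * logNormL1 M) * L + (n + 1) * (c * (z - t)) := by
          rw [← sub_sub]
          gcongr
          · exact sum_abs_add_smul_mulVec_le M (y t) hzt.le hz_diag
          · simpa [Real.norm_of_nonneg hzt.le] using hz_rem
  rw [slope_def_field, div_lt_iff₀ hzt]
  nlinarith

end logNormL1

/-- If `B : ℝ → Matrix` is continuous and `y` solves `y' = B(t) y` on `[s, T]`, then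
`‖y(t)‖₁ ≤ exp(∫_s^t γ(B(u)) du) ‖y(s)‖₁` for every `t ∈ [s, T]`. -/
theorem stmt2 {n : ℕ} (B : ℝ → Matrix (Fin (n + 1)) (Fin (n + 1)) ℝ)
    (hB : Continuous B) (s T : ℝ) (y : ℝ → Fin (n + 1) → ℝ)
    (hy : ∀ t ∈ Set.Icc s T, HasDerivAt y (B t *ᵥ y t) t) :
    ∀ t ∈ Set.Icc s T,
      ∑ i, |y t i| ≤ Real.exp (∫ u in s..t, logNormL1 (B u)) * ∑ i, |y s i| := by
  have hyc : ContinuousOn y (Set.Icc s T) :=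
    continuousOn_of_forall_continuousAt fun t ht => (hy t ht).continuousAt
  have hnormc : ContinuousOn (fun u => ∑ i, |y u i|) (Set.Icc s T) := by fun_prop
  intro t ht
  refine le_exp_integral_mul_of_slope_right_le hnormc (continuous_logNormL1.comp hB)
    (sum_nonneg fun i _ => abs_nonneg _) (fun x hx r hr => ?_) ht
  exact (eventually_slope_sum_abs_lt (hy x (Set.Ico_subset_Icc_self hx)) hr).frequently
end

section
/- Let M : ℝ → (n×n real matrices) be continuous with M_{ij}(t) ≥ 0 for all i ≠ j and all t, and let α : ℝ → ℝ be continuous with Σ_{1≤i≤n} M_{ij}(t) ≤ −α(t) for every column j and every t. If w : ℝ → ℝⁿ is differentiable with w′(t) = M(t) w(t) for all t ∈ [s, T], then for every t ∈ [s, T], ‖w(t)‖₁ ≤ exp( −∫_s^t α(u) du ) · ‖w(s)‖₁. -/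
open Filter Topology Finset Matrix

/-!
Put `β(t) = ∫ₛᵗ α`. The ℓ¹ norm is the largest of the functionals `v ↦ σ ⬝ᵥ v` over sign
vectors `σ ∈ {-1, 0, 1}ⁿ`, so `e^{β(t)} ‖w(t)‖₁` is the maximum of the finitely many
differentiable functions `e^{β(t)} σ ⬝ᵥ w(t)`. A sign vector attaining the maximum at `t` has
`σᵢ wᵢ = |wᵢ|` for every `i`, and then essential nonnegativity and the column-sum bound give
`σ ⬝ᵥ M w ≤ -α ‖w‖₁`: every active function has nonpositive derivative. A maximum of finitely
many functions whose active members have nonpositive right derivatives does not increase.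
-/

theorem SignType.abs_cast_le_one {α : Type*} [Ring α] [LinearOrder α] [IsStrictOrderedRing α]
    (s : SignType) : |(s : α)| ≤ 1 := by
  cases s <;> simp

theorem mul_le_abs_of_abs_le_one {a b : ℝ} (ha : |a| ≤ 1) : a * b ≤ |b| :=
  calc a * b ≤ |a| * |b| := by rw [← abs_mul]; exact le_abs_self _
    _ ≤ |b| := mul_le_of_le_one_left (abs_nonneg b) ha

section DotProduct

variable {ι : Type*} [Fintype ι] {σ v : ι → ℝ}

theorem dotProduct_le_sum_abs (hσ : ∀ i, |σ i| ≤ 1) : σ ⬝ᵥ v ≤ ∑ i, |v i| :=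
  sum_le_sum fun i _ => mul_le_abs_of_abs_le_one (hσ i)

theorem mul_eq_abs_of_dotProduct_eq_sum_abs (hσ : ∀ i, |σ i| ≤ 1)
    (h : σ ⬝ᵥ v = ∑ i, |v i|) (i : ι) : σ i * v i = |v i| :=
  (sum_eq_sum_iff_of_le fun j _ => mul_le_abs_of_abs_le_one (hσ j)).1 h i (mem_univ i)

theorem sign_dotProduct_self (v : ι → ℝ) : (fun i => (SignType.sign (v i) : ℝ)) ⬝ᵥ v = ∑ i, |v i| :=
  sum_congr rfl fun i _ => sign_mul_self (v i)

theorem dotProduct_mulVec_le_mul_sum_abs {M : Matrix ι ι ℝ} {c : ℝ}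
    (hoff : ∀ i j, i ≠ j → 0 ≤ M i j) (hcol : ∀ j, ∑ i, M i j ≤ c)
    (hσ : ∀ i, |σ i| ≤ 1) (hσv : σ ⬝ᵥ v = ∑ i, |v i|) :
    σ ⬝ᵥ (M *ᵥ v) ≤ c * ∑ i, |v i| := by
  have hcolumn : ∀ j, (σ ᵥ* M) j * v j ≤ c * |v j| := by
    intro j
    calc (σ ᵥ* M) j * v j = ∑ i, M i j * (σ i * v j) := by
          simp only [vecMul, dotProduct, sum_mul]
          exact sum_congr rfl fun i _ => by ring
      _ ≤ ∑ i, M i j * |v j| := by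
          refine sum_le_sum fun i _ => ?_
          by_cases hij : i = j
          · rw [hij, mul_eq_abs_of_dotProduct_eq_sum_abs hσ hσv j]
          · exact mul_le_mul_of_nonneg_left (mul_le_abs_of_abs_le_one (hσ i)) (hoff i j hij)
      _ = (∑ i, M i j) * |v j| := (sum_mul ..).symm
      _ ≤ c * |v j| := mul_le_mul_of_nonneg_right (hcol j) (abs_nonneg _)
  rw [dotProduct_mulVec, mul_sum]
  exact sum_le_sum fun j _ => hcolumn j

theorem HasDerivAt.const_dotProduct {w : ℝ → ι → ℝ} {w' : ι → ℝ} {x : ℝ}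
    (hw : HasDerivAt w w' x) (σ : ι → ℝ) : HasDerivAt (fun t => σ ⬝ᵥ w t) (σ ⬝ᵥ w') x :=
  HasDerivAt.fun_sum fun i _ => (hasDerivAt_pi.1 hw i).const_mul (σ i)

end DotProduct

theorem le_left_of_forall_active_deriv_nonpos {ι : Type*} [Finite ι] {f f' : ι → ℝ → ℝ}
    {g : ℝ → ℝ} {a b : ℝ} (hg : ContinuousOn g (Set.Icc a b))
    (hle : ∀ i x, f i x ≤ g x) (hattain : ∀ x, ∃ i, f i x = g x)
    (hf : ∀ i, ∀ x ∈ Set.Ico a b, HasDerivWithinAt (f i) (f' i x) (Set.Ici x) x)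
    (hf' : ∀ i, ∀ x ∈ Set.Ico a b, f i x = g x → f' i x ≤ 0) :
    ∀ x ∈ Set.Icc a b, g x ≤ g a := by
  refine fun x hx => image_le_of_liminf_slope_right_le_deriv_boundary hg le_rfl
    continuousOn_const (B := fun _ => g a) (B' := fun _ => 0)
    (fun x _ => hasDerivWithinAt_const _ _ _) ?_ hx
  intro x hx r hr
  have hclose : ∀ i, ∀ᶠ z in 𝓝[>] x, f i z < g x + (z - x) * r := by
    intro i
    rcases (hle i x).eq_or_lt with hact | hinact
    · filter_upwards [(hf i x hx).Ioi_of_Ici.limsup_slope_le' (lt_irrefl x)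
        ((hf' i x hx hact).trans_lt hr), self_mem_nhdsWithin] with z hslope hz
      rw [slope_def_field, div_lt_iff₀ (sub_pos.2 hz)] at hslope
      linarith
    · have hcont := ((hf i x hx).continuousWithinAt.mono Set.Ioi_subset_Ici_self).tendsto
      filter_upwards [hcont.eventually_lt_const hinact, self_mem_nhdsWithin] with z hz hxz
      nlinarith [sub_pos.2 (Set.mem_Ioi.1 hxz)]
  refine Eventually.frequently ?_
  filter_upwards [eventually_all.2 hclose, self_mem_nhdsWithin] with z hz hxz
  obtain ⟨i, hi⟩ := hattain z
  rw [slope_def_field, div_lt_iff₀ (sub_pos.2 hxz)]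
  linarith [hz i]

theorem exp_mul_sum_abs_le_of_hasDerivAt_mulVec {ι : Type*} [Fintype ι] {M : ℝ → Matrix ι ι ℝ}
    {α β : ℝ → ℝ} {w : ℝ → ι → ℝ} {s T : ℝ} (hoff : ∀ t, ∀ i j, i ≠ j → 0 ≤ M t i j)
    (hcol : ∀ t j, ∑ i, M t i j ≤ -α t) (hβ : ∀ t ∈ Set.Icc s T, HasDerivAt β (α t) t)
    (hw : ∀ t ∈ Set.Icc s T, HasDerivAt w (M t *ᵥ w t) t) :
    ∀ t ∈ Set.Icc s T, Real.exp (β t) * ∑ i, |w t i| ≤ Real.exp (β s) * ∑ i, |w s i| := by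
  have hderiv_nonpos {σ : ι → ℝ} (hσ : ∀ i, |σ i| ≤ 1) {t : ℝ}
      (hact : Real.exp (β t) * (σ ⬝ᵥ w t) = Real.exp (β t) * ∑ i, |w t i|) :
      Real.exp (β t) * (α t * (σ ⬝ᵥ w t) + σ ⬝ᵥ (M t *ᵥ w t)) ≤ 0 := by
    have hact' := mul_left_cancel₀ (Real.exp_pos (β t)).ne' hact
    have hMw := dotProduct_mulVec_le_mul_sum_abs (hoff t) (hcol t) hσ hact'
    rw [hact']
    exact mul_nonpos_of_nonneg_of_nonpos (Real.exp_pos _).le (by linarith)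
  have hg : ContinuousOn (fun t => Real.exp (β t) * ∑ i, |w t i|) (Set.Icc s T) := by
    have hβc : ContinuousOn β (Set.Icc s T) := fun t ht => (hβ t ht).continuousAt.continuousWithinAt
    have hwc : ContinuousOn w (Set.Icc s T) := fun t ht => (hw t ht).continuousAt.continuousWithinAt
    fun_prop
  refine le_left_of_forall_active_deriv_nonpos (ι := ι → SignType)
    (f := fun σ t => Real.exp (β t) * ((fun i => (σ i : ℝ)) ⬝ᵥ w t))
    (f' := fun σ t => Real.exp (β t) *
      (α t * ((fun i => (σ i : ℝ)) ⬝ᵥ w t) + (fun i => (σ i : ℝ)) ⬝ᵥ (M t *ᵥ w t))) hg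
    (fun σ t => mul_le_mul_of_nonneg_left
      (dotProduct_le_sum_abs fun i => (σ i).abs_cast_le_one) (Real.exp_pos _).le)
    (fun t => ⟨fun i => SignType.sign (w t i), by rw [sign_dotProduct_self]⟩)
    (fun σ t ht => ?_) (fun σ t _ hact => hderiv_nonpos (fun i => (σ i).abs_cast_le_one) hact)
  have ht' := Set.Ico_subset_Icc_self ht
  exact (((hβ t ht').exp.mul ((hw t ht').const_dotProduct _)).congr_deriv
    (by ring)).hasDerivWithinAt

theorem stmt3_general {n : ℕ} (M : ℝ → Matrix (Fin (n + 1)) (Fin (n + 1)) ℝ)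
    (hoff : ∀ t, ∀ i j, i ≠ j → 0 ≤ M t i j)
    (α : ℝ → ℝ) (hα : Continuous α)
    (hcol : ∀ t, ∀ j, ∑ i, M t i j ≤ -α t)
    (s T : ℝ) (w : ℝ → Fin (n + 1) → ℝ)
    (hw : ∀ t ∈ Set.Icc s T, HasDerivAt w (M t *ᵥ w t) t) :
    ∀ t ∈ Set.Icc s T,
      ∑ i, |w t i| ≤ Real.exp (-∫ u in s..t, α u) * ∑ i, |w s i| := by
  intro t ht
  have hβ (x : ℝ) : HasDerivAt (fun t => ∫ u in s..t, α u) (α x) x :=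
    (hα.integral_hasStrictDerivAt s x).hasDerivAt
  have hdecay := exp_mul_sum_abs_le_of_hasDerivAt_mulVec hoff hcol (fun x _ => hβ x) hw t ht
  rw [intervalIntegral.integral_same, Real.exp_zero, one_mul] at hdecay
  rwa [Real.exp_neg, le_inv_mul_iff₀ (Real.exp_pos _)]

/-- If `M : ℝ → Matrix` is continuous, essentially nonnegative (off-diagonal entries
nonnegative), with every column sum of `M(t)` bounded above by `−α(t)` for a continuous
`α`, and `w` solves `w' = M(t) w` on `[s, T]`, then
`‖w(t)‖₁ ≤ exp(−∫_s^t α(u) du) ‖w(s)‖₁` for every `t ∈ [s, T]`. -/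
theorem stmt3 {n : ℕ} (M : ℝ → Matrix (Fin (n + 1)) (Fin (n + 1)) ℝ)
    (hM : Continuous M) (hoff : ∀ t, ∀ i j, i ≠ j → 0 ≤ M t i j)
    (α : ℝ → ℝ) (hα : Continuous α)
    (hcol : ∀ t, ∀ j, ∑ i, M t i j ≤ -α t)
    (s T : ℝ) (w : ℝ → Fin (n + 1) → ℝ)
    (hw : ∀ t ∈ Set.Icc s T, HasDerivAt w (M t *ᵥ w t) t) :
    ∀ t ∈ Set.Icc s T,
      ∑ i, |w t i| ≤ Real.exp (-∫ u in s..t, α u) * ∑ i, |w s i| :=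
  stmt3_general M hoff α hα hcol s T w hw
end

section
/- Let M : ℝ → (n×n real matrices) be continuous with M_{ij}(t) ≥ 0 for all i ≠ j and all t (essential nonnegativity). If u : ℝ → ℝⁿ is differentiable with u′(t) = M(t) u(t) for all t ≥ s and u(s) ≥ 0 componentwise, then u(t) ≥ 0 componentwise for all t ≥ s. -/
/-!
Perturb the solution to `w = u + ε e^{K(t-s)} 𝟙`, where `K` exceeds every row sum of `M` on
`[s, t]`. At a point where `w ≥ 0` and `w i = 0`, essential nonnegativity gives
`(M w)_i ≥ 0`, so `w_i' = (M w)_i + ε e^{K(t-s)} (K - ∑ⱼ M_ij) > 0`: the trajectory `w` can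
only leave the orthant through a face it is strictly moving away from, hence it never does.
Letting `ε → 0` gives `u ≥ 0`.
-/

open Filter Topology Matrix Set

theorem HasDerivWithinAt.eventually_lt_of_pos {f : ℝ → ℝ} {f' x : ℝ}
    (hf : HasDerivWithinAt f f' (Ici x) x) (hf' : 0 < f') : ∀ᶠ y in 𝓝[>] x, f x < f y := by
  have hslope : Tendsto (slope f x) (𝓝[>] x) (𝓝 f') :=
    (hasDerivWithinAt_iff_tendsto_slope' (lt_irrefl x)).1 hf.Ioi_of_Ici
  filter_upwards [hslope.eventually (lt_mem_nhds hf'), self_mem_nhdsWithin] with y hy hxy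
  rw [slope_def_field, div_pos_iff_of_pos_right (sub_pos.2 hxy)] at hy
  exact sub_pos.1 hy

theorem Matrix.mulVec_apply_nonneg_of_apply_eq_zero {ι R : Type*} [Fintype ι] [Semiring R]
    [PartialOrder R] [IsOrderedRing R] {A : Matrix ι ι R} (hA : ∀ i j, i ≠ j → 0 ≤ A i j)
    {v : ι → R} (hv : 0 ≤ v) {i : ι} (hvi : v i = 0) : 0 ≤ (A *ᵥ v) i :=
  Finset.sum_nonneg fun j _ => by
    rcases eq_or_ne i j with rfl | hij
    · simp [hvi]
    · exact mul_nonneg (hA i j hij) (hv j)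

theorem nonneg_of_deriv_right_pos_on_boundary {ι : Type*} [Finite ι] {w : ℝ → ι → ℝ} {a b : ℝ}
    (hw : ContinuousOn w (Icc a b)) (ha : 0 ≤ w a)
    (hbdry : ∀ t ∈ Ico a b, 0 ≤ w t → ∀ i, w t i = 0 →
      ∃ d > 0, HasDerivWithinAt (fun r => w r i) d (Ici t) t) :
    ∀ t ∈ Icc a b, 0 ≤ w t := by
  have hclosed : IsClosed (w ⁻¹' Ici 0 ∩ Icc a b) :=
    inter_comm (Icc a b) _ ▸ hw.preimage_isClosed_of_isClosed isClosed_Icc isClosed_Ici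
  refine hclosed.Icc_subset_of_forall_mem_nhdsWithin ha ?_
  rintro t ⟨ht, htab⟩
  have hwt : ContinuousWithinAt w (Ici t) t :=
    (hw t (Ico_subset_Icc_self htab)).mono_of_mem_nhdsWithin (Icc_mem_nhdsGE_of_mem htab)
  refine (eventually_all.2 fun i => ?_ : ∀ᶠ r in 𝓝[>] t, ∀ i, 0 ≤ w r i)
  rcases (ht i).eq_or_lt with hwi | hwi
  · obtain ⟨d, hd, hderiv⟩ := hbdry t htab ht i hwi.symm
    filter_upwards [hderiv.eventually_lt_of_pos hd] with r hr
    exact (hwi.trans_lt hr).le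
  · have : Tendsto (fun r => w r i) (𝓝[>] t) (𝓝 (w t i)) :=
      ((continuous_apply i).continuousAt.comp_continuousWithinAt hwt).mono_left
        (nhdsWithin_mono _ Ioi_subset_Ici_self)
    exact (this.eventually (lt_mem_nhds hwi)).mono fun r hr => hr.le

theorem IsCompact.exists_forall_sum_row_lt {X ι : Type*} [TopologicalSpace X] [Fintype ι]
    {M : X → Matrix ι ι ℝ} {K : Set X} (hK : IsCompact K) (hM : ContinuousOn M K) :
    ∃ c, ∀ t ∈ K, ∀ i, ∑ j, M t i j < c := by
  choose v hv using fun i => hK.bddAbove_image (f := fun t => ∑ j, M t i j) (by fun_prop)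
  obtain ⟨c, hc⟩ := (Set.finite_range v).bddAbove
  exact ⟨c + 1, fun t ht i =>
    ((hv i (mem_image_of_mem _ ht)).trans (hc (mem_range_self i))).trans_lt (lt_add_one c)⟩

theorem nonneg_of_hasDerivWithinAt_mulVec_of_offDiag_nonneg {ι : Type*} [Fintype ι]
    {M : ℝ → Matrix ι ι ℝ} {u : ℝ → ι → ℝ} {a b : ℝ} (hM : ContinuousOn M (Icc a b))
    (hoff : ∀ t ∈ Icc a b, ∀ i j, i ≠ j → 0 ≤ M t i j)
    (hu : ∀ t ∈ Icc a b, HasDerivWithinAt u (M t *ᵥ u t) (Icc a b) t) (ha : 0 ≤ u a) :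
    ∀ t ∈ Icc a b, 0 ≤ u t := by
  obtain ⟨K, hK⟩ := isCompact_Icc.exists_forall_sum_row_lt hM
  have hu_cont : ContinuousOn u (Icc a b) := fun t ht => (hu t ht).continuousWithinAt
  have hperturbed : ∀ ε > 0, ∀ t ∈ Icc a b, 0 ≤ fun i => u t i + ε * Real.exp (K * (t - a)) := by
    intro ε hε
    have hexp (t : ℝ) : HasDerivAt (fun r => ε * Real.exp (K * (r - a)))
        (ε * (Real.exp (K * (t - a)) * K)) t := by
      simpa using (((hasDerivAt_id t).sub_const a).const_mul K).exp.const_mul ε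
    refine nonneg_of_deriv_right_pos_on_boundary (by fun_prop)
      (fun i => add_nonneg (ha i) (by positivity)) fun t ht hwt i hwi => ?_
    have htab := Ico_subset_Icc_self ht
    refine ⟨(M t *ᵥ u t) i + ε * (Real.exp (K * (t - a)) * K), ?_, ?_⟩
    · have hu_eq : u t = (fun i => u t i + ε * Real.exp (K * (t - a))) -
          (ε * Real.exp (K * (t - a))) • 1 := by
        ext; simp
      have hboundary := mulVec_apply_nonneg_of_apply_eq_zero (hoff t htab) hwt hwi
      have hgap : 0 < ε * Real.exp (K * (t - a)) * (K - ∑ j, M t i j) :=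
        mul_pos (by positivity) (sub_pos.2 (hK t htab i))
      have hrow : (M t *ᵥ 1) i = ∑ j, M t i j := by simp [mulVec, dotProduct]
      rw [hu_eq, mulVec_sub, mulVec_smul, Pi.sub_apply, Pi.smul_apply, smul_eq_mul, hrow]
      linarith
    · exact ((hasDerivWithinAt_pi.1 (hu t htab) i).add (hexp t).hasDerivWithinAt)
        |>.mono_of_mem_nhdsWithin (Icc_mem_nhdsGE_of_mem ht)
  intro t ht i
  refine le_of_forall_pos_le_add fun δ hδ => ?_
  have := hperturbed (δ / Real.exp (K * (t - a))) (by positivity) t ht i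
  simpa [div_mul_cancel₀ _ (Real.exp_pos _).ne'] using this

/-- If `M : ℝ → Matrix` is continuous and essentially nonnegative (all off-diagonal
entries nonnegative for every `t`), and `u` solves `u' = M(t) u` for `t ≥ s` with
`u(s) ≥ 0` componentwise, then `u(t) ≥ 0` componentwise for all `t ≥ s`. -/
theorem stmt4 {n : ℕ} (M : ℝ → Matrix (Fin (n + 1)) (Fin (n + 1)) ℝ)
    (hM : Continuous M) (hoff : ∀ t, ∀ i j, i ≠ j → 0 ≤ M t i j)
    (s : ℝ) (u : ℝ → Fin (n + 1) → ℝ)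
    (hu : ∀ t, s ≤ t → HasDerivAt u (M t *ᵥ u t) t)
    (hu0 : ∀ i, 0 ≤ u s i) :
    ∀ t, s ≤ t → ∀ i, 0 ≤ u t i := by
  intro t hst
  exact nonneg_of_hasDerivWithinAt_mulVec_of_offDiag_nonneg hM.continuousOn (fun r _ => hoff r)
    (fun r hr => (hu r hr.1).hasDerivWithinAt) hu0 t ⟨hst, le_rfl⟩
end

section
/- Let M : ℝ → (n×n real matrices) be continuous with M_{ij}(t) ≥ 0 for all i ≠ j and all t, and let f : ℝ → ℝⁿ be continuous with f(t) ≥ 0 componentwise for all t. If r : ℝ → ℝⁿ is differentiable with r′(t) = M(t) r(t) + f(t) for all t ≥ s and r(s) ≥ 0 componentwise, then r(t) ≥ 0 componentwise for all t ≥ s. -/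
/-! Perturb `r` to `g t = r t + ε e^{C (t - s)} 𝟙`, where `C` exceeds the row sums of `M` on
`[s, T]`. At a time where `g ≥ 0` and some coordinate `g i` vanishes, essential nonnegativity
gives `(M g)ᵢ ≥ 0`, and the exponential factor outgrows `-(M 𝟙)ᵢ`, so `g i` is strictly
increasing there: `g` can never leave the nonnegative orthant. Letting `ε → 0` gives `r ≥ 0`. -/

open Filter Topology Matrix Set

theorem HasDerivAt.eventually_nhdsGT_lt {f : ℝ → ℝ} {f' x : ℝ} (hf : HasDerivAt f f' x)
    (hf' : 0 < f') : ∀ᶠ y in 𝓝[>] x, f x < f y := by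
  filter_upwards [(hf.tendsto_slope.mono_left (nhdsGT_le_nhdsNE x)).eventually
    (eventually_gt_nhds hf'), self_mem_nhdsWithin] with y hslope hy
  exact (slope_pos_iff hy).mp hslope

theorem nonneg_on_Icc_of_hasDerivAt_pos_of_eq_zero {ι : Type*} [Fintype ι] {g g' : ℝ → ι → ℝ}
    {a b : ℝ} (hg : ∀ t ∈ Icc a b, HasDerivAt g (g' t) t) (ha : 0 ≤ g a)
    (hboundary : ∀ t ∈ Ico a b, 0 ≤ g t → ∀ i, g t i = 0 → 0 < g' t i) :
    ∀ t ∈ Icc a b, 0 ≤ g t := by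
  have hclosed : IsClosed ({t | 0 ≤ g t} ∩ Icc a b) := by
    rw [inter_comm]
    exact ContinuousOn.preimage_isClosed_of_isClosed
      (fun t ht => (hg t ht).continuousAt.continuousWithinAt) isClosed_Icc isClosed_Ici
  refine hclosed.Icc_subset_of_forall_mem_nhdsWithin ha fun x ⟨hx, hxI⟩ => ?_
  refine eventually_all.mpr fun i => ?_
  have hgi : HasDerivAt (fun t => g t i) (g' x i) x :=
    hasDerivAt_pi.mp (hg x (Ico_subset_Icc_self hxI)) i
  rcases (hx i).eq_or_lt with hzero | hpos
  · filter_upwards [hgi.eventually_nhdsGT_lt (hboundary x hxI hx i hzero.symm)] with t ht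
    exact hzero.le.trans ht.le
  · exact nhdsWithin_le_nhds ((hgi.continuousAt.eventually (eventually_gt_nhds hpos)).mono
      fun t ht => ht.le)

theorem Matrix.mulVec_apply_nonneg_of_offDiag_nonneg {ι R : Type*} [Fintype ι] [Semiring R]
    [PartialOrder R] [IsOrderedRing R] {A : Matrix ι ι R} {v : ι → R} {i : ι}
    (hA : ∀ j, j ≠ i → 0 ≤ A i j) (hv : 0 ≤ v) (hvi : v i = 0) : 0 ≤ (A *ᵥ v) i := by
  refine Finset.sum_nonneg fun j _ => ?_
  by_cases hj : j = i
  · simp [hj, hvi]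
  · exact mul_nonneg (hA j hj) (hv j)

theorem IsCompact.exists_mulVec_one_lt {ι : Type*} [Fintype ι] {K : Set ℝ} (hK : IsCompact K)
    {M : ℝ → Matrix ι ι ℝ} (hM : Continuous M) : ∃ C, ∀ t ∈ K, ∀ i, (M t *ᵥ 1) i < C := by
  obtain ⟨C, hC⟩ := hK.exists_bound_of_continuousOn
    (hM.matrix_mulVec continuous_const).continuousOn
  exact ⟨C + 1, fun t ht i =>
    ((Real.le_norm_self _).trans ((norm_le_pi_norm _ i).trans (hC t ht))).trans_lt (lt_add_one C)⟩

theorem nonneg_add_exp_of_hasDerivAt_mulVec_add {ι : Type*} [Fintype ι]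
    {M : ℝ → Matrix ι ι ℝ} (hoff : ∀ t, ∀ i j, i ≠ j → 0 ≤ M t i j) {f r : ℝ → ι → ℝ}
    (hf0 : ∀ t, 0 ≤ f t) {s T C ε : ℝ} (hC : ∀ t ∈ Icc s T, ∀ i, (M t *ᵥ 1) i < C)
    (hε : 0 < ε) (hr : ∀ t ∈ Icc s T, HasDerivAt r (M t *ᵥ r t + f t) t) (hr0 : 0 ≤ r s) :
    ∀ t ∈ Icc s T, ∀ i, 0 ≤ r t i + ε * Real.exp (C * (t - s)) := by
  have he : ∀ t, HasDerivAt (fun t => ε * Real.exp (C * (t - s)))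
      (C * (ε * Real.exp (C * (t - s)))) t := fun t => by
    have := (((hasDerivAt_id t).sub_const s).const_mul C).exp.const_mul ε
    simp only [id, mul_one] at this
    exact this.congr_deriv (by ring)
  set e : ℝ → ℝ := fun t => ε * Real.exp (C * (t - s))
  have hg : ∀ t ∈ Icc s T,
      HasDerivAt (fun t => r t + e t • 1) (M t *ᵥ r t + f t + (C * e t) • 1) t :=
    fun t ht => (hr t ht).add ((he t).smul_const 1)
  have hboundary : ∀ t ∈ Ico s T, 0 ≤ r t + e t • 1 → ∀ i, (r t + e t • 1) i = 0 →
      0 < (M t *ᵥ r t + f t + (C * e t) • 1) i := by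
    intro t ht hgt i hgi
    have hMg : 0 ≤ (M t *ᵥ (r t + e t • 1)) i :=
      mulVec_apply_nonneg_of_offDiag_nonneg (fun j hj => hoff t i j hj.symm) hgt hgi
    have hrow := hC t (Ico_subset_Icc_self ht) i
    have he_pos : 0 < e t := by positivity
    simp only [mulVec_add, mulVec_smul, Pi.add_apply, Pi.smul_apply, smul_eq_mul,
      Pi.one_apply, mul_one] at hMg ⊢
    have hfi : 0 ≤ f t i := hf0 t i
    linarith [mul_lt_mul_of_pos_left hrow he_pos]
  have hg_nonneg := nonneg_on_Icc_of_hasDerivAt_pos_of_eq_zero hg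
    (add_nonneg hr0 (smul_nonneg (by positivity) zero_le_one)) hboundary
  intro t ht i
  simpa [e] using hg_nonneg t ht i

theorem stmt5_general {n : ℕ} (M : ℝ → Matrix (Fin (n + 1)) (Fin (n + 1)) ℝ)
    (hM : Continuous M) (hoff : ∀ t, ∀ i j, i ≠ j → 0 ≤ M t i j)
    (f : ℝ → Fin (n + 1) → ℝ) (hf0 : ∀ t, ∀ i, 0 ≤ f t i)
    (s : ℝ) (r : ℝ → Fin (n + 1) → ℝ)
    (hr : ∀ t, s ≤ t → HasDerivAt r (M t *ᵥ r t + f t) t)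
    (hr0 : ∀ i, 0 ≤ r s i) :
    ∀ t, s ≤ t → ∀ i, 0 ≤ r t i := by
  intro T hT i
  obtain ⟨C, hC⟩ := (isCompact_Icc (a := s) (b := T)).exists_mulVec_one_lt hM
  have hE : 0 < Real.exp (C * (T - s)) := Real.exp_pos _
  refine le_of_forall_pos_le_add fun δ hδ => ?_
  have hperturbed := nonneg_add_exp_of_hasDerivAt_mulVec_add hoff hf0 hC (div_pos hδ hE)
    (fun t ht => hr t ht.1) hr0 T ⟨hT, le_rfl⟩ i
  rwa [div_mul_cancel₀ δ hE.ne'] at hperturbed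

/-- If `M : ℝ → Matrix` is continuous and essentially nonnegative (all off-diagonal
entries nonnegative for every `t`), `f : ℝ → ℝⁿ` is continuous and componentwise
nonnegative, and `r` solves the inhomogeneous system `r' = M(t) r + f(t)` for `t ≥ s`
with `r(s) ≥ 0` componentwise, then `r(t) ≥ 0` componentwise for all `t ≥ s`. -/
theorem stmt5 {n : ℕ} (M : ℝ → Matrix (Fin (n + 1)) (Fin (n + 1)) ℝ)
    (hM : Continuous M) (hoff : ∀ t, ∀ i j, i ≠ j → 0 ≤ M t i j)
    (f : ℝ → Fin (n + 1) → ℝ) (hf : Continuous f) (hf0 : ∀ t, ∀ i, 0 ≤ f t i)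
    (s : ℝ) (r : ℝ → Fin (n + 1) → ℝ)
    (hr : ∀ t, s ≤ t → HasDerivAt r (M t *ᵥ r t + f t) t)
    (hr0 : ∀ i, 0 ≤ r s i) :
    ∀ t, s ≤ t → ∀ i, 0 ≤ r t i :=
  stmt5_general M hM hoff f hf0 s r hr hr0
end

section
/- Let a > 0 and K ≥ 0. Let M : ℝ → (n×n real matrices) be continuous with M_{ij}(t) ≥ 0 for all i ≠ j and Σ_{1≤i≤n} M_{ij}(t) ≤ −a for every column j and every t ≥ 0, and let f : ℝ → ℝⁿ be continuous with ‖f(t)‖₁ ≤ K for all t ≥ 0. If r : ℝ → ℝⁿ is differentiable with r′(t) = M(t) r(t) + f(t) for all t ≥ 0, then ‖r(t)‖₁ ≤ e^{−a t} ‖r(0)‖₁ + K/a for all t ≥ 0; in particular limsup_{t→∞} ‖r(t)‖₁ ≤ K/a. -/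
open Filter Topology Finset Matrix

/-!
The ℓ¹ norm `V(t) = ∑ |rᵢ(t)|` need not be differentiable where some `rᵢ(t) = 0`, but it always
has a right derivative `∑ σᵢ rᵢ'(t)` for a sign vector `σ` of `r(t)` (`σᵢ rᵢ(t) = |rᵢ(t)|`,
`|σᵢ| ≤ 1`). Because the off-diagonal entries of `M(t)` are nonnegative, `∑ σᵢ (M(t) r)ᵢ` is at
most `∑ⱼ (∑ᵢ M(t)ᵢⱼ) |rⱼ| ≤ -a V(t)`, so `D⁺V ≤ -a V + K`. Grönwall's inequality for right
derivatives gives `V(t) ≤ e^{-at} V(0) + (K/a)(1 - e^{-at})`, and the limsup bound follows.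
-/

theorem mul_le_abs_of_abs_le_one_s6 {s x : ℝ} (hs : |s| ≤ 1) : s * x ≤ |x| :=
  calc s * x ≤ |s| * |x| := by rw [← abs_mul]; exact le_abs_self _
    _ ≤ |x| := mul_le_of_le_one_left (abs_nonneg x) hs

theorem abs_sign_le_one (x : ℝ) : |(SignType.sign x : ℝ)| ≤ 1 := by
  rcases lt_trichotomy x 0 with hx | rfl | hx <;> simp [*]

theorem HasDerivAt.exists_hasDerivWithinAt_Ioi_abs {φ : ℝ → ℝ} {φ' t : ℝ}
    (hφ : HasDerivAt φ φ' t) :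
    ∃ s : ℝ, |s| ≤ 1 ∧ s * φ t = |φ t| ∧
      HasDerivWithinAt (fun z => |φ z|) (s * φ') (Set.Ioi t) t := by
  rcases eq_or_ne (φ t) 0 with h0 | h0
  -- at a zero of `φ`, the right slopes of `|φ|` are the absolute values of those of `φ`
  · refine ⟨SignType.sign φ', abs_sign_le_one φ', by simp [h0], ?_⟩
    rw [sign_mul_self, hasDerivWithinAt_iff_tendsto_slope' Set.self_notMem_Ioi]
    have hslope := (hasDerivAt_iff_tendsto_slope.1 hφ).mono_left
      (nhdsWithin_mono t fun z (hz : t < z) => hz.ne')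
    refine hslope.abs.congr' ?_
    filter_upwards [self_mem_nhdsWithin] with z (hz : t < z)
    rw [slope_def_field, slope_def_field, abs_div, abs_of_pos (sub_pos.2 hz), h0]
    simp
  · exact ⟨SignType.sign (φ t), abs_sign_le_one _, sign_mul_self _,
      ((hasDerivAt_abs h0).comp t hφ).hasDerivWithinAt⟩

theorem HasDerivAt.exists_hasDerivWithinAt_Ioi_sum_abs {ι : Type*} [Fintype ι]
    {r : ℝ → ι → ℝ} {r' : ι → ℝ} {t : ℝ} (hr : HasDerivAt r r' t) :
    ∃ σ : ι → ℝ, (∀ i, |σ i| ≤ 1) ∧ (∀ i, σ i * r t i = |r t i|) ∧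
      HasDerivWithinAt (fun z => ∑ i, |r z i|) (∑ i, σ i * r' i) (Set.Ioi t) t := by
  choose σ hσ hσr hderiv using fun i => (hasDerivAt_pi.1 hr i).exists_hasDerivWithinAt_Ioi_abs
  exact ⟨σ, hσ, hσr, HasDerivWithinAt.fun_sum fun i _ => hderiv i⟩

theorem sum_mul_mulVec_le_mul_sum_abs {ι : Type*} [Fintype ι] {A : Matrix ι ι ℝ} {c : ℝ}
    (hoff : ∀ i j, i ≠ j → 0 ≤ A i j) (hcol : ∀ j, ∑ i, A i j ≤ c)
    {σ x : ι → ℝ} (hσ : ∀ i, |σ i| ≤ 1) (hσx : ∀ i, σ i * x i = |x i|) :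
    ∑ i, σ i * (A *ᵥ x) i ≤ c * ∑ i, |x i| := by
  have hterm : ∀ i j, σ i * A i j * x j ≤ A i j * |x j| := by
    intro i j
    rcases eq_or_ne i j with rfl | hij
    · rw [mul_comm (σ i), mul_assoc, hσx]
    · calc σ i * A i j * x j = A i j * (σ i * x j) := by ring
        _ ≤ A i j * |x j| :=
          mul_le_mul_of_nonneg_left (mul_le_abs_of_abs_le_one_s6 (hσ i)) (hoff i j hij)
  calc ∑ i, σ i * (A *ᵥ x) i = ∑ j, ∑ i, σ i * A i j * x j := by
        simp only [mulVec, dotProduct, Finset.mul_sum, mul_assoc]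
        exact Finset.sum_comm
    _ ≤ ∑ j, (∑ i, A i j) * |x j| := by
        gcongr with j
        rw [Finset.sum_mul]
        exact Finset.sum_le_sum fun i _ => hterm i j
    _ ≤ ∑ j, c * |x j| := by gcongr with j; exact hcol j
    _ = c * ∑ j, |x j| := (Finset.mul_sum ..).symm

theorem le_exp_neg_mul_add_div_of_hasDerivWithinAt_Ioi {V : ℝ → ℝ} {a K : ℝ} (ha : 0 < a)
    (hK : 0 ≤ K) (hVc : ContinuousOn V (Set.Ici 0))
    (hV : ∀ t, 0 ≤ t → ∃ d, HasDerivWithinAt V d (Set.Ioi t) t ∧ d ≤ -a * V t + K) :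
    ∀ t, 0 ≤ t → V t ≤ Real.exp (-a * t) * V 0 + K / a := by
  intro t ht
  have hslope : ∀ x ∈ Set.Ico (0 : ℝ) t, ∀ ρ, -a * V x + K < ρ →
      ∃ᶠ z in 𝓝[>] x, (z - x)⁻¹ * (V z - V x) < ρ := by
    intro x hx ρ hρ
    obtain ⟨d, hd, hdle⟩ := hV x hx.1
    rw [hasDerivWithinAt_iff_tendsto_slope' Set.self_notMem_Ioi] at hd
    simpa only [slope_def_field, div_eq_inv_mul] using
      (hd.eventually_lt_const (hdle.trans_lt hρ)).frequently
  have hgronwall := le_gronwallBound_of_liminf_deriv_right_le (hVc.mono Set.Icc_subset_Ici_self)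
    hslope le_rfl (fun _ _ => le_rfl) t ⟨ht, le_rfl⟩
  rw [sub_zero, gronwallBound_of_K_ne_0 (neg_ne_zero.2 ha.ne'), div_neg] at hgronwall
  nlinarith [mul_nonneg (div_nonneg hK ha.le) (Real.exp_pos (-a * t)).le]

theorem limsup_le_of_le_exp_neg_mul_add {V : ℝ → ℝ} {a C L : ℝ} (ha : 0 < a)
    (hV0 : ∀ t, 0 ≤ V t) (hV : ∀ t, 0 ≤ t → V t ≤ Real.exp (-a * t) * C + L) :
    limsup V atTop ≤ L := by
  have hlim : Tendsto (fun t => Real.exp (-a * t) * C + L) atTop (𝓝 L) := by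
    simpa using ((Real.tendsto_exp_atBot.comp
      (tendsto_id.const_mul_atTop_of_neg (neg_neg_of_pos ha))).mul_const C).add_const L
  calc limsup V atTop ≤ limsup (fun t => Real.exp (-a * t) * C + L) atTop :=
        limsup_le_limsup ((eventually_ge_atTop 0).mono hV)
          (isCoboundedUnder_le_of_le atTop hV0) hlim.isBoundedUnder_le
    _ = L := hlim.limsup_eq

theorem stmt6_general {n : ℕ} (a K : ℝ) (ha : 0 < a) (hK : 0 ≤ K)
    (M : ℝ → Matrix (Fin (n + 1)) (Fin (n + 1)) ℝ)
    (hoff : ∀ t, 0 ≤ t → ∀ i j, i ≠ j → 0 ≤ M t i j)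
    (hcol : ∀ t, 0 ≤ t → ∀ j, ∑ i, M t i j ≤ -a)
    (f : ℝ → Fin (n + 1) → ℝ)
    (hfK : ∀ t, 0 ≤ t → ∑ i, |f t i| ≤ K)
    (r : ℝ → Fin (n + 1) → ℝ)
    (hr : ∀ t, 0 ≤ t → HasDerivAt r (M t *ᵥ r t + f t) t) :
    (∀ t, 0 ≤ t → ∑ i, |r t i| ≤ Real.exp (-a * t) * (∑ i, |r 0 i|) + K / a) ∧
      Filter.limsup (fun t => ∑ i, |r t i|) Filter.atTop ≤ K / a := by
  have hcont : ContinuousOn (fun t => ∑ i, |r t i|) (Set.Ici 0) := fun t ht =>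
    ((continuous_finsetSum _ fun i _ => (continuous_apply i).abs).continuousAt.comp
      (hr t ht).continuousAt).continuousWithinAt
  have hderiv : ∀ t, 0 ≤ t → ∃ d, HasDerivWithinAt (fun t => ∑ i, |r t i|) d (Set.Ioi t) t ∧
      d ≤ -a * ∑ i, |r t i| + K := by
    intro t ht
    obtain ⟨σ, hσ, hσr, hd⟩ := (hr t ht).exists_hasDerivWithinAt_Ioi_sum_abs
    refine ⟨_, hd, ?_⟩
    calc ∑ i, σ i * (M t *ᵥ r t + f t) i
        = ∑ i, σ i * (M t *ᵥ r t) i + ∑ i, σ i * f t i := by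
          simp only [Pi.add_apply, mul_add, Finset.sum_add_distrib]
      _ ≤ -a * ∑ i, |r t i| + ∑ i, |f t i| := by
          gcongr ?_ + ?_
          · exact sum_mul_mulVec_le_mul_sum_abs (hoff t ht) (hcol t ht) hσ hσr
          · exact Finset.sum_le_sum fun i _ => mul_le_abs_of_abs_le_one_s6 (hσ i)
      _ ≤ -a * ∑ i, |r t i| + K := by gcongr; exact hfK t ht
  have hbound := le_exp_neg_mul_add_div_of_hasDerivWithinAt_Ioi ha hK hcont hderiv
  exact ⟨hbound, limsup_le_of_le_exp_neg_mul_add ha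
    (fun t => Finset.sum_nonneg fun i _ => abs_nonneg _) hbound⟩

/-- Let `a > 0`, `K ≥ 0`. If `M : ℝ → Matrix` is continuous, essentially nonnegative
with all column sums at most `−a` for `t ≥ 0`, `f` is continuous with `‖f(t)‖₁ ≤ K`
for `t ≥ 0`, and `r' = M(t) r + f(t)` for `t ≥ 0`, then
`‖r(t)‖₁ ≤ e^{−a t} ‖r(0)‖₁ + K/a` for all `t ≥ 0`; in particular
`limsup_{t→∞} ‖r(t)‖₁ ≤ K/a`. -/
theorem stmt6 {n : ℕ} (a K : ℝ) (ha : 0 < a) (hK : 0 ≤ K)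
    (M : ℝ → Matrix (Fin (n + 1)) (Fin (n + 1)) ℝ) (hM : Continuous M)
    (hoff : ∀ t, 0 ≤ t → ∀ i j, i ≠ j → 0 ≤ M t i j)
    (hcol : ∀ t, 0 ≤ t → ∀ j, ∑ i, M t i j ≤ -a)
    (f : ℝ → Fin (n + 1) → ℝ) (hf : Continuous f)
    (hfK : ∀ t, 0 ≤ t → ∑ i, |f t i| ≤ K)
    (r : ℝ → Fin (n + 1) → ℝ)
    (hr : ∀ t, 0 ≤ t → HasDerivAt r (M t *ᵥ r t + f t) t) :
    (∀ t, 0 ≤ t → ∑ i, |r t i| ≤ Real.exp (-a * t) * (∑ i, |r 0 i|) + K / a) ∧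
      Filter.limsup (fun t => ∑ i, |r t i|) Filter.atTop ≤ K / a :=
  stmt6_general a K ha hK M hoff hcol f hfK r hr
end
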